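/- arXiv:2201.10768 — 3 statements merged into one kernel-verified Lean document; each statement's English description precedes it below -/
import Mathlib

section
/- Let A = UP be the polar decomposition of A ∈ GL(n,ℝ) with det(A) > 0, and suppose all eigenvalues of U lie in the open right half-plane. If A(t) is a differentiable curve with A(0) = A and Ȧ := A'(0), and U(t) is its orthogonal polar factor with U'(0) = UΩ for Ω ∈ sk(n), then Ω satisfies the Lyapunov equation PΩ + ΩP + ȦᵀU − UᵀȦ = 0. -/
open Matrix

attribute [local instance] Matrix.frobeniusNormedAddCommGroup Matrix.frobeniusNormedSpace

/-! Since `P = Uᵀ A` is symmetric along the whole curve, so is its derivative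
`(UΩ)ᵀ A + Uᵀ Ȧ = -Ω P + Uᵀ Ȧ`; writing out this symmetry is the Lyapunov equation. -/

section Calculus

variable {𝕜 : Type*} [NontriviallyNormedField 𝕜] {m n α : Type*} [Fintype m] [Fintype n]
  [NormedAddCommGroup α] [NormedSpace 𝕜 α]

theorem HasDerivAt.matrix_transpose {f : 𝕜 → Matrix m n α} {f' : Matrix m n α} {x : 𝕜}
    (hf : HasDerivAt f f' x) : HasDerivAt (fun y => (f y)ᵀ) f'ᵀ x :=
  ((transposeLinearEquiv m n 𝕜 α).toLinearMap.mkContinuous 1 fun A => by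
    simp [frobenius_norm_transpose]).hasFDerivAt.comp_hasDerivAt x hf

theorem HasDerivAt.isSymm {F : 𝕜 → Matrix m m α} {F' : Matrix m m α} {x : 𝕜}
    (hF : HasDerivAt F F' x) (hsymm : ∀ y, (F y).IsSymm) : F'.IsSymm := by
  have htranspose : (fun y => (F y)ᵀ) = F := funext fun y => (hsymm y).eq
  exact (htranspose ▸ hF.matrix_transpose).unique hF

end Calculus

section Product

attribute [local instance] Matrix.frobeniusNormedRing Matrix.frobeniusNormedAlgebra

variable {𝕜 : Type*} [RCLike 𝕜] {m : Type*} [Fintype m] [DecidableEq m]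

theorem HasDerivAt.matrix_transpose_mul {f g : 𝕜 → Matrix m m 𝕜} {f' g' : Matrix m m 𝕜}
    {x : 𝕜} (hf : HasDerivAt f f' x) (hg : HasDerivAt g g' x) :
    HasDerivAt (fun y => (f y)ᵀ * g y) (f'ᵀ * g x + (f x)ᵀ * g') x :=
  hf.matrix_transpose.mul hg

end Product

theorem Matrix.lyapunov_eq_zero_of_isSymm {m R : Type*} [Fintype m] [DecidableEq m]
    [CommRing R] {U P Ω B : Matrix m m R} (hU : Uᵀ * U = 1) (hP : P.IsSymm) (hΩ : Ωᵀ = -Ω)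
    (h : ((U * Ω)ᵀ * (U * P) + Uᵀ * B).IsSymm) :
    P * Ω + Ω * P + Bᵀ * U - Uᵀ * B = 0 := by
  have hΩP : (U * Ω)ᵀ * (U * P) = -(Ω * P) := by
    rw [transpose_mul, hΩ, Matrix.mul_assoc, ← Matrix.mul_assoc Uᵀ, hU, Matrix.one_mul,
      Matrix.neg_mul]
  rw [hΩP, IsSymm, transpose_add, transpose_neg, transpose_mul, transpose_mul, hP.eq, hΩ,
    transpose_transpose, Matrix.mul_neg, neg_neg] at h
  rw [sub_eq_zero, add_right_comm, h]
  abel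

theorem polar_factor_derivative_lyapunov_general (n : ℕ)
    (A U P : ℝ → Matrix (Fin n) (Fin n) ℝ)
    (A' : Matrix (Fin n) (Fin n) ℝ) (Ω : Matrix (Fin n) (Fin n) ℝ)
    (hpolar : ∀ t, A t = U t * P t)
    (hU : ∀ t, (U t)ᵀ * U t = 1)
    (hP : ∀ t, (P t).PosDef)
    (hΩ : Ωᵀ = -Ω)
    (hA' : HasDerivAt A A' 0)
    (hU' : HasDerivAt U (U 0 * Ω) 0) :
    P 0 * Ω + Ω * P 0 + A'ᵀ * U 0 - (U 0)ᵀ * A' = 0 := by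
  have hPsymm : ∀ t, (P t).IsSymm := fun t => isHermitian_iff_isSymm.mp (hP t).isHermitian
  have hUtA : ∀ t, ((U t)ᵀ * A t).IsSymm := fun t => by
    rw [hpolar, ← Matrix.mul_assoc, hU, Matrix.one_mul]
    exact hPsymm t
  have hderiv := (hU'.matrix_transpose_mul hA').isSymm hUtA
  rw [hpolar 0] at hderiv
  exact lyapunov_eq_zero_of_isSymm (hU 0) (hPsymm 0) hΩ hderiv

theorem polar_factor_derivative_lyapunov (n : ℕ)
    (A U P : ℝ → Matrix (Fin n) (Fin n) ℝ)
    (A' : Matrix (Fin n) (Fin n) ℝ) (Ω : Matrix (Fin n) (Fin n) ℝ)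
    (hpolar : ∀ t, A t = U t * P t)
    (hU : ∀ t, (U t)ᵀ * U t = 1)
    (hUdet : ∀ t, (U t).det = 1)
    (hP : ∀ t, (P t).PosDef)
    (hdet : 0 < (A 0).det)
    (hspec : ∀ lam ∈ spectrum ℂ ((U 0).map (Complex.ofReal)), 0 < lam.re)
    (hΩ : Ωᵀ = -Ω)
    (hA' : HasDerivAt A A' 0)
    (hU' : HasDerivAt U (U 0 * Ω) 0) :
    P 0 * Ω + Ω * P 0 + A'ᵀ * U 0 - (U 0)ᵀ * A' = 0 :=
  polar_factor_derivative_lyapunov_general n A U P A' Ω hpolar hU hP hΩ hA' hU'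
end

section
/- Let A = UP ∈ GL(n,ℝ) be a polar decomposition with U ∈ O(n) and P symmetric positive-definite, and let φ(Ω) = ΩP + PΩ on sk(n) and ψ(B) = UᵀB − BᵀU from ℝ^{n×n} to sk(n). Then the adjoint of dℙ_A := φ⁻¹ ∘ ψ is given by dℙ_A*(Ω) = U·X, where X ∈ sk(n) is the unique solution of the Lyapunov equation PX + XP = Ω; equivalently, ⟨Ω, (φ⁻¹∘ψ)(B)⟩_{sk} = tr((U φ⁻¹(Ω)) Bᵀ) for all Ω ∈ sk(n), B ∈ ℝ^{n×n}. -/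
open Matrix

theorem dP_adjoint (n : ℕ) (A U P : Matrix (Fin n) (Fin n) ℝ)
    (hA : IsUnit A) (hU : Uᵀ * U = 1) (hP : P.PosDef) (hpolar : A = U * P)
    (Ω B X Y : Matrix (Fin n) (Fin n) ℝ)
    (hΩ : Ωᵀ = -Ω) (hX : Xᵀ = -X) (hY : Yᵀ = -Y)
    (hXeq : X * P + P * X = Uᵀ * B - Bᵀ * U)
    (hYeq : Y * P + P * Y = Ω) :
    (1 / 2 : ℝ) * Matrix.trace (Ω * Xᵀ) = Matrix.trace ((U * Y) * Bᵀ) := by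
  have h1 : trace (Ω * Xᵀ) = - trace ((Y * P + P * Y) * X) := by
    rw [hX, hYeq, Matrix.mul_neg, trace_neg]
  have h2 : trace ((Y * P + P * Y) * X) = trace (Y * (X * P + P * X)) := by
    rw [Matrix.add_mul, Matrix.mul_add, trace_add, trace_add, Matrix.mul_assoc,
      Matrix.mul_assoc, add_comm]
    congr 1
    rw [trace_mul_comm, Matrix.mul_assoc, trace_mul_comm, Matrix.mul_assoc]
  have h3 : trace (Y * (X * P + P * X)) = trace (Y * (Uᵀ * B)) - trace (Y * (Bᵀ * U)) := by
    rw [hXeq, Matrix.mul_sub, trace_sub]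
  have h4 : trace (Y * (Uᵀ * B)) = - trace (U * Y * Bᵀ) := by
    have h := trace_transpose (Y * (Uᵀ * B))
    rw [Matrix.transpose_mul, Matrix.transpose_mul, Matrix.transpose_transpose, hY,
      Matrix.mul_neg, trace_neg] at h
    rw [← h, Matrix.mul_assoc, trace_mul_comm]
  have h5 : trace (Y * (Bᵀ * U)) = trace (U * Y * Bᵀ) := by
    rw [← Matrix.mul_assoc, trace_mul_comm, Matrix.mul_assoc, ← Matrix.mul_assoc,
      trace_mul_comm]
  rw [h1, h2, h3, h4, h5]
  ring
end

section
/- Let U₀ = A ∈ GL(n,ℝ) and define the Newton iteration U_{k+1} = (1/2)(U_k + U_k^{-T}). If A = UP is the polar decomposition of A, then each U_k has the same orthogonal polar factor U, i.e., U_k = U P_k for some symmetric positive-definite P_k, where P_{k+1} = (1/2)(P_k + P_k^{-1}) and P₀ = P. -/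
/-!
Writing `U_k = U P_k`, the orthogonality of `U` and the symmetry of `P_k` give
`U_k⁻ᵀ = U P_k⁻¹`, so the Newton step on `U_k` is `U` times the step
`P ↦ (P + P⁻¹) / 2` on `P_k`. That step preserves positive definiteness, since `P_k⁻¹`
is positive definite as well.
-/

namespace Matrix

variable {ι R : Type*} [Fintype ι] [DecidableEq ι]

noncomputable def newtonStep (Q : Matrix ι ι ℝ) : Matrix ι ι ℝ :=
  (1 / 2 : ℝ) • (Q + Q⁻¹)

theorem PosDef.newtonStep {Q : Matrix ι ι ℝ} (hQ : Q.PosDef) : Q.newtonStep.PosDef :=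
  (hQ.add hQ.inv).smul (by norm_num)

theorem inv_transpose_orthogonal_mul [CommRing R] {U Q : Matrix ι ι R}
    (hU : Uᵀ * U = 1) (hQ : Q.IsSymm) : (U * Q)⁻¹ᵀ = U * Q⁻¹ := by
  rw [mul_inv_rev, transpose_mul, transpose_nonsing_inv, transpose_nonsing_inv, hQ.eq,
    inv_eq_right_inv hU]

theorem orthogonal_mul_newtonStep {U Q : Matrix ι ι ℝ} (hU : Uᵀ * U = 1) (hQ : Q.IsSymm) :
    U * Q.newtonStep = (1 / 2 : ℝ) • (U * Q + (U * Q)⁻¹ᵀ) := by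
  rw [inv_transpose_orthogonal_mul hU hQ, newtonStep, Matrix.mul_smul, Matrix.mul_add]

end Matrix

open Matrix

theorem newton_iteration_polar_factor_general (n : ℕ)
    (A U P : Matrix (Fin n) (Fin n) ℝ)
    (hU : Uᵀ * U = 1) (hP : P.PosDef) (hpolar : A = U * P)
    (Useq : ℕ → Matrix (Fin n) (Fin n) ℝ)
    (hU0 : Useq 0 = A)
    (hUstep : ∀ k, Useq (k + 1) = (1 / 2 : ℝ) • (Useq k + ((Useq k)⁻¹)ᵀ)) :
    ∃ Pseq : ℕ → Matrix (Fin n) (Fin n) ℝ,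
      Pseq 0 = P ∧
      (∀ k, (Pseq k).PosDef) ∧
      (∀ k, Useq k = U * Pseq k) ∧
      ∀ k, Pseq (k + 1) = (1 / 2 : ℝ) • (Pseq k + (Pseq k)⁻¹) := by
  set Pseq : ℕ → Matrix (Fin n) (Fin n) ℝ := fun k => newtonStep^[k] P
  have hPstep (k : ℕ) : Pseq (k + 1) = (Pseq k).newtonStep :=
    Function.iterate_succ_apply' _ _ _
  have hPpos (k : ℕ) : (Pseq k).PosDef := by
    induction k with
    | zero => exact hP
    | succ k ih => exact hPstep k ▸ ih.newtonStep
  have hUP (k : ℕ) : Useq k = U * Pseq k := by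
    induction k with
    | zero => rw [hU0, hpolar]; rfl
    | succ k ih =>
      have hPsymm : (Pseq k).IsSymm := isHermitian_iff_isSymm.mp (hPpos k).isHermitian
      rw [hUstep, hPstep, orthogonal_mul_newtonStep hU hPsymm, ih]
  exact ⟨Pseq, rfl, hPpos, hUP, hPstep⟩

theorem newton_iteration_polar_factor (n : ℕ)
    (A U P : Matrix (Fin n) (Fin n) ℝ) (hA : IsUnit A)
    (hU : Uᵀ * U = 1) (hP : P.PosDef) (hpolar : A = U * P)
    (Useq : ℕ → Matrix (Fin n) (Fin n) ℝ)
    (hU0 : Useq 0 = A)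
    (hUstep : ∀ k, Useq (k + 1) = (1 / 2 : ℝ) • (Useq k + ((Useq k)⁻¹)ᵀ)) :
    ∃ Pseq : ℕ → Matrix (Fin n) (Fin n) ℝ,
      Pseq 0 = P ∧
      (∀ k, (Pseq k).PosDef) ∧
      (∀ k, Useq k = U * Pseq k) ∧
      ∀ k, Pseq (k + 1) = (1 / 2 : ℝ) • (Pseq k + (Pseq k)⁻¹) :=
  newton_iteration_polar_factor_general n A U P hU hP hpolar Useq hU0 hUstep
end
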